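/- There exists ω₀ > 0 such that T(G, G, G) = ω₀ G, where G(x) = e^{−|x|²/2} and T(f,g,h)(ξ) = ∫_{−1}^{1} ∫_{ℝ²} f(ξ+x) conj(g(ξ+x+λx⊥)) h(ξ+λx⊥) dx dλ. Consequently, g(t,ξ) = e^{iω₀ t} e^{−|ξ|²/2} is an explicit solution of the continuous resonant equation −i ∂_t g = T(g,g,g). -/

import Mathlib

/-!
Because `x ⊥ λx⊥`, the identity `|ξ|² + |ξ+x+λx⊥|² = |ξ+x|² + |ξ+λx⊥|²` collapses the integrand of
`T(G,G,G)(ξ)` to `G(ξ) e^{-|ξ+x+λx⊥|²}`. The shear `x ↦ x + λx⊥` has determinant `1 + λ²`, so the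
inner integral is `π/(1+λ²)`, and integrating over `λ ∈ [-1,1]` gives `ω₀ = π²/2`. Finally `T` is
covariant under unimodular phases, `T(cf,cg,ch) = c T(f,g,h)` for `|c| = 1`, so `e^{iω₀t} G` solves
the resonant equation.
-/

open MeasureTheory
noncomputable section

abbrev E2 := EuclideanSpace ℝ (Fin 2)

/-- Counterclockwise rotation by π/2 in the plane. -/
def rot (z : E2) : E2 := WithLp.toLp 2 ![-(z 1), z 0]

/-- The continuous resonant (CR) trilinear operator
T(f,g,h)(ξ) = ∫_{-1}^{1} ∫_{ℝ²} f(ξ+x)·conj(g(ξ+x+λx⊥))·h(ξ+λx⊥) dx dλ. -/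
def T (f g h : E2 → ℂ) (ξ : E2) : ℂ :=
  ∫ l in Set.Icc (-1 : ℝ) 1, ∫ x : E2,
    f (ξ + x) * (starRingEnd ℂ) (g (ξ + x + l • rot x)) * h (ξ + l • rot x)

/-- The Gaussian G(x) = e^{-|x|²/2}. -/
def G (x : E2) : ℂ := Complex.exp (-(‖x‖ : ℂ)^2 / 2)

open Real Complex ComplexConjugate

theorem integral_comp_linearMap_of_det_ne_zero {E F : Type*} [NormedAddCommGroup E]
    [NormedSpace ℝ E] [FiniteDimensional ℝ E] [MeasurableSpace E] [BorelSpace E]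
    [NormedAddCommGroup F] [NormedSpace ℝ F] (μ : Measure E) [μ.IsAddHaarMeasure]
    {A : E →ₗ[ℝ] E} (hA : LinearMap.det A ≠ 0) (f : E → F) :
    ∫ x, f (A x) ∂μ = |LinearMap.det A|⁻¹ • ∫ y, f y ∂μ := by
  let e := (A.equivOfDetNeZero hA).toContinuousLinearEquiv.toHomeomorph.toMeasurableEquiv
  calc ∫ x, f (A x) ∂μ = ∫ y, f y ∂(μ.map e) := (integral_map_equiv e f).symm
    _ = ∫ y, f y ∂(μ.map A) := rfl
    _ = |LinearMap.det A|⁻¹ • ∫ y, f y ∂μ := by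
      rw [μ.map_linearMap_addHaar_eq_smul_addHaar hA, integral_smul_measure, abs_inv,
        ENNReal.toReal_ofReal (by positivity)]

theorem norm_sq_add_norm_add_add_sq_of_inner_eq_zero {V : Type*} [NormedAddCommGroup V]
    [InnerProductSpace ℝ V] (u : V) {a b : V} (hab : inner ℝ a b = 0) :
    ‖u‖ ^ 2 + ‖u + a + b‖ ^ 2 = ‖u + a‖ ^ 2 + ‖u + b‖ ^ 2 := by
  rw [norm_add_sq_real (u + a) b, norm_add_sq_real u b, inner_add_left, hab]
  ring

theorem integral_cexp_neg_sq_norm_E2 : ∫ v : E2, cexp (-(‖v‖ : ℂ) ^ 2) = π := by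
  have h := GaussianFourier.integral_cexp_neg_mul_sq_norm (V := E2) (b := 1) (by norm_num)
  simp only [neg_mul, one_mul, finrank_euclideanSpace_fin] at h
  rw [h]
  norm_num

theorem inner_smul_rot_self (l : ℝ) (x : E2) : inner ℝ x (l • rot x) = 0 := by
  simp [PiLp.inner_apply, Fin.sum_univ_two, rot]
  ring

def rotₗ : E2 →ₗ[ℝ] E2 where
  toFun := rot
  map_add' a b := by ext i; fin_cases i <;> simp [rot, add_comm]
  map_smul' c a := by ext i; fin_cases i <;> simp [rot]

def shear (l : ℝ) : E2 →ₗ[ℝ] E2 := LinearMap.id + l • rotₗ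

theorem shear_apply (l : ℝ) (x : E2) : shear l x = x + l • rot x := rfl

theorem det_shear (l : ℝ) : LinearMap.det (shear l) = 1 + l ^ 2 := by
  have h : shear l = Matrix.toLpLin 2 2 !![1, -l; l, 1] := by
    ext x i
    fin_cases i <;>
      simp [shear_apply, rot, Matrix.toLpLin_apply, dotProduct, Fin.sum_univ_two, add_comm]
  rw [h, Matrix.toLpLin_eq_toLin, LinearMap.det_toLin, Matrix.det_fin_two_of]
  ring

theorem integral_cexp_neg_sq_norm_add_shear (ξ : E2) (l : ℝ) :
    ∫ x : E2, cexp (-(‖ξ + x + l • rot x‖ : ℂ) ^ 2) = ((π / (1 + l ^ 2) : ℝ) : ℂ) := by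
  have hA : LinearMap.det (shear l) ≠ 0 := by rw [det_shear]; positivity
  simp_rw [add_assoc ξ, ← shear_apply]
  rw [integral_comp_linearMap_of_det_ne_zero volume hA (fun y => cexp (-(‖ξ + y‖ : ℂ) ^ 2)),
    integral_add_left_eq_self (fun y : E2 => cexp (-(‖y‖ : ℂ) ^ 2)),
    integral_cexp_neg_sq_norm_E2, det_shear, abs_of_pos (by positivity), Complex.real_smul]
  push_cast
  ring

theorem integral_Icc_inv_one_add_sq : ∫ l in Set.Icc (-1 : ℝ) 1, (1 + l ^ 2)⁻¹ = π / 2 := by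
  rw [integral_Icc_eq_integral_Ioc, ← intervalIntegral.integral_of_le (by norm_num),
    integral_inv_one_add_sq, arctan_one, arctan_neg, arctan_one]
  ring

theorem conj_G (x : E2) : conj (G x) = G x := by
  rw [G, ← Complex.exp_conj]
  simp [map_div₀, map_ofNat]

theorem G_mul_conj_G_mul_G (ξ : E2) {x y : E2} (hxy : inner ℝ x y = 0) :
    G (ξ + x) * conj (G (ξ + x + y)) * G (ξ + y) = G ξ * cexp (-(‖ξ + x + y‖ : ℂ) ^ 2) := by
  have h := congrArg ofReal (norm_sq_add_norm_add_add_sq_of_inner_eq_zero ξ hxy)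
  push_cast at h
  rw [conj_G]
  simp only [G, ← Complex.exp_add]
  congr 1
  linear_combination h / 2

theorem T_G_G_G (ξ : E2) : T G G G ξ = ((π ^ 2 / 2 : ℝ) : ℂ) * G ξ := by
  have hinner (l : ℝ) : ∫ x : E2, G (ξ + x) * conj (G (ξ + x + l • rot x)) * G (ξ + l • rot x)
      = G ξ * ((π * (1 + l ^ 2)⁻¹ : ℝ) : ℂ) := by
    have hpt (x : E2) := G_mul_conj_G_mul_G ξ (inner_smul_rot_self l x)
    simp_rw [hpt]
    rw [integral_const_mul, integral_cexp_neg_sq_norm_add_shear, div_eq_mul_inv]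
  rw [T, funext hinner, integral_const_mul, integral_complex_ofReal, integral_const_mul,
    integral_Icc_inv_one_add_sq]
  push_cast
  ring

theorem T_const_mul_of_norm_eq_one {c : ℂ} (hc : ‖c‖ = 1) (f g h : E2 → ℂ) (ξ : E2) :
    T (fun η => c * f η) (fun η => c * g η) (fun η => c * h η) ξ = c * T f g h ξ := by
  have hcc : c * conj c = 1 := by rw [mul_conj, normSq_eq_norm_sq, hc]; norm_num
  have hpt (a b d : ℂ) : c * a * conj (c * b) * (c * d) = c * (a * conj b * d) := by
    rw [map_mul]
    linear_combination a * conj b * d * c * hcc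
  simp only [T, hpt, integral_const_mul]

/-- There is ω₀ > 0 with T(G,G,G) = ω₀G; consequently g(t,ξ) = e^{iω₀t}e^{-|ξ|²/2} solves the
continuous resonant equation -i∂_t g = T(g,g,g), i.e. ∂_t g = i·T(g,g,g). -/
theorem stmt12 :
    ∃ ω₀ : ℝ, 0 < ω₀ ∧ (∀ ξ : E2, T G G G ξ = (ω₀ : ℂ) * G ξ) ∧
      ∀ (t : ℝ) (ξ : E2),
        HasDerivAt (fun s : ℝ => Complex.exp (Complex.I * (ω₀ : ℂ) * (s : ℂ)) * G ξ)
          (Complex.I *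
            T (fun η => Complex.exp (Complex.I * (ω₀ : ℂ) * (t : ℂ)) * G η)
              (fun η => Complex.exp (Complex.I * (ω₀ : ℂ) * (t : ℂ)) * G η)
              (fun η => Complex.exp (Complex.I * (ω₀ : ℂ) * (t : ℂ)) * G η) ξ) t := by
  refine ⟨π ^ 2 / 2, by positivity, T_G_G_G, fun t ξ => ?_⟩
  have hphase : ‖cexp (I * ((π ^ 2 / 2 : ℝ) : ℂ) * t)‖ = 1 := by
    rw [mul_assoc, ← ofReal_mul, norm_exp_I_mul_ofReal]
  rw [T_const_mul_of_norm_eq_one hphase, T_G_G_G]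
  have h := ((hasDerivAt_id t).ofReal_comp.const_mul (I * ((π ^ 2 / 2 : ℝ) : ℂ))).cexp.mul_const
    (G ξ)
  refine h.congr_deriv ?_
  simp only [id, ofReal_one, mul_one]
  ring
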